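/- arXiv:1302.6045 — 4 statements merged into one kernel-verified Lean document; each statement's English description precedes it below -/
import Mathlib

section
/- Let C be a triangulated category admitting a bounded t-structure. Then C is idempotent complete, i.e. every idempotent endomorphism of an object of C splits. -/
/-!
STATEMENT 4.
A triangulated category admitting a bounded t-structure is idempotent complete.
-/

open CategoryTheory Limits Pretriangulated

namespace Stmt4

variable {C : Type u} [Category.{v} C] [HasZeroObject C] [Preadditive C] [HasShift C ℤ]
  [∀ n : ℤ, (shiftFunctor C n).Additive] [Pretriangulated C]

/-- A t-structure on a triangulated category `C`, given by its aisle `L = C^{≤0}` and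
co-aisle `G = C^{≥0}`, both strict (closed under isomorphisms) full subcategories. -/
structure IsTStructure (L G : Set C) : Prop where
  aisle_iso_closed : ∀ ⦃X Y : C⦄, (X ≅ Y) → X ∈ L → Y ∈ L
  coaisle_iso_closed : ∀ ⦃X Y : C⦄, (X ≅ Y) → X ∈ G → Y ∈ G
  shift_aisle : ∀ X ∈ L, (X⟦(1 : ℤ)⟧) ∈ L
  shift_coaisle : ∀ X ∈ G, (X⟦(-1 : ℤ)⟧) ∈ G
  hom_vanish : ∀ (X Y : C), X ∈ L → Y ∈ G → ∀ f : X ⟶ (Y⟦(-1 : ℤ)⟧), f = 0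
  exists_triangle : ∀ X : C, ∃ (M' M'' : C) (f : M' ⟶ X) (g : X ⟶ M'')
    (h : M'' ⟶ M'⟦(1 : ℤ)⟧), M' ∈ L ∧ (M''⟦(1 : ℤ)⟧) ∈ G ∧
      Triangle.mk f g h ∈ distTriang C

/-- Boundedness of a t-structure `(L, G)`:
`⋃ₙ Σⁿ L = C = ⋃ₙ Σⁿ G`. -/
def IsBoundedTStructure (L G : Set C) : Prop :=
  (∀ X : C, ∃ n : ℤ, (X⟦n⟧) ∈ L) ∧ (∀ X : C, ∃ n : ℤ, (X⟦n⟧) ∈ G)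

end Stmt4

open Stmt4

/-!
Split idempotents glue along distinguished triangles. Let `φ` be an idempotent endomorphism of a
distinguished triangle `A ⟶ X ⟶ B ⟶ A⟦1⟧` whose components on `A` and `B` split, with images
`Y₁` and `Y₃`. Completing `Y₃ ⟶ B ⟶ A⟦1⟧ ⟶ Y₁⟦1⟧` to a triangle gives an object `Y`, and the
five lemma makes `Y` a retract of `X`; the resulting split idempotent `e` of `X` agrees with
`p = φ.hom₂` after `A ⟶ X` and before `X ⟶ B`, which forces `(e - p)² = 0`. Two idempotents with
nilpotent difference are conjugate, so `p` splits too.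

Truncation functors provide such triangles with `A` and `B` of smaller t-amplitude, so by
induction it remains to split idempotents of (shifted) objects of the heart. There the fibre `Z`
of `1 - p` plays the role of `Im p ⊕ (Im p)⟦-1⟧`, and its truncation `τ_{≤ a} Z` is the image
of `p`.
-/

namespace IsIdempotentElem

variable {R : Type*} [Ring R] {p e : R}

theorem exists_semiconjBy_unit_of_sub_mul_self_eq_zero (hp : IsIdempotentElem p)
    (he : IsIdempotentElem e) (h : (e - p) * (e - p) = 0) :
    ∃ u : Rˣ, SemiconjBy (u : R) p e := by
  -- `e * p + (1 - e) * (1 - p)` intertwines any two idempotents; by `key` it is a unit here.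
  have key : ∀ {a b : R}, IsIdempotentElem a → IsIdempotentElem b →
      (b * a + (1 - b) * (1 - a)) * (a * b + (1 - a) * (1 - b)) = 1 - (b - a) * (b - a) := by
    intro a b ha hb
    have haa : ∀ x, a * (a * x) = a * x := fun x => by rw [← mul_assoc, ha.eq]
    simp only [mul_add, add_mul, mul_sub, sub_mul, one_mul, mul_one, mul_assoc, ha.eq, hb.eq,
      haa]
    abel
  have h' : (p - e) * (p - e) = 0 := by rw [← neg_sub, neg_mul_neg, h]
  refine ⟨⟨e * p + (1 - e) * (1 - p), p * e + (1 - p) * (1 - e), ?_, ?_⟩, ?_⟩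
  · rw [key hp he, h, sub_zero]
  · rw [key he hp, h', sub_zero]
  · have hee : e * (e * p) = e * p := by rw [← mul_assoc, he.eq]
    simp only [SemiconjBy, mul_add, add_mul, mul_sub, sub_mul, one_mul, mul_one, mul_assoc,
      hp.eq, he.eq, hee]
    abel

end IsIdempotentElem

namespace CategoryTheory

section

variable {C : Type*} [Category* C]

def IsSplitIdempotent {X : C} (p : X ⟶ X) : Prop :=
  ∃ (Y : C) (i : Y ⟶ X) (r : X ⟶ Y), i ≫ r = 𝟙 Y ∧ r ≫ i = p

namespace IsSplitIdempotent

variable {X : C} {p e : X ⟶ X}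

lemma idem (h : IsSplitIdempotent p) : p ≫ p = p := by
  obtain ⟨Y, i, r, hir, rfl⟩ := h
  rw [Category.assoc, reassoc_of% hir]

lemma of_conj (he : IsSplitIdempotent e) (u : X ≅ X) (hu : p ≫ u.hom = u.hom ≫ e) :
    IsSplitIdempotent p := by
  obtain ⟨Y, i, r, hir, rfl⟩ := he
  refine ⟨Y, i ≫ u.inv, u.hom ≫ r, by simp [hir], ?_⟩
  rw [Category.assoc, ← Category.assoc r, ← Category.assoc u.hom, ← hu]
  simp

lemma of_sub_comp_self_eq_zero [Preadditive C] (he : IsSplitIdempotent e) (hp : p ≫ p = p)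
    (h : (e - p) ≫ (e - p) = 0) : IsSplitIdempotent p := by
  obtain ⟨u, hu⟩ := IsIdempotentElem.exists_semiconjBy_unit_of_sub_mul_self_eq_zero
    (R := End X) hp he.idem h
  exact he.of_conj (Aut.unitsEndEquivAut X u) hu

lemma of_factorization [Preadditive C] {K : C} (j : K ⟶ X) (q : X ⟶ K) (hqj : q ≫ j = p)
    (hjp : j ≫ p = j) (hj : ∀ g : K ⟶ K, g ≫ j = 0 → g = 0) : IsSplitIdempotent p :=
  ⟨K, j, q, sub_eq_zero.1 (hj _ (by rw [Preadditive.sub_comp, Category.assoc, hqj, hjp,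
    Category.id_comp, sub_self])), hqj⟩

end IsSplitIdempotent

end

variable {C : Type*} [Category* C] [Preadditive C] [HasZeroObject C] [HasShift C ℤ]
  [∀ n : ℤ, (CategoryTheory.shiftFunctor C n).Additive] [Pretriangulated C]

namespace Pretriangulated.Triangle

variable {T : Triangle C} (hT : T ∈ distTriang C)
include hT

lemma eq_zero_of_comp_mor₁_eq_zero {W : C} (hW : ∀ f : W ⟶ T.obj₃⟦(-1 : ℤ)⟧, f = 0)
    {g : W ⟶ T.obj₁} (hg : g ≫ T.mor₁ = 0) : g = 0 := by
  obtain ⟨f, rfl⟩ : ∃ f : W ⟶ T.obj₃⟦(-1 : ℤ)⟧, g = f ≫ T.invRotate.mor₁ :=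
    coyoneda_exact₂ _ (inv_rot_of_distTriang _ hT) g hg
  rw [hW f]
  exact zero_comp

lemma comp_self_eq_zero {d : T.obj₂ ⟶ T.obj₂} (h₁ : T.mor₁ ≫ d = 0) (h₂ : d ≫ T.mor₂ = 0) :
    d ≫ d = 0 := by
  obtain ⟨d', rfl⟩ := yoneda_exact₂ _ hT d h₁
  rw [← Category.assoc, h₂, zero_comp]

lemma exists_isSplitIdempotent_of_hom₁_hom₃ (φ : T ⟶ T) (h₁ : IsSplitIdempotent φ.hom₁)
    (h₃ : IsSplitIdempotent φ.hom₃) :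
    ∃ e : T.obj₂ ⟶ T.obj₂, IsSplitIdempotent e ∧
      T.mor₁ ≫ e = φ.hom₁ ≫ T.mor₁ ∧ e ≫ T.mor₂ = T.mor₂ ≫ φ.hom₃ := by
  obtain ⟨Y₁, i₁, r₁, hir₁, hri₁⟩ := h₁
  obtain ⟨Y₃, i₃, r₃, hir₃, hri₃⟩ := h₃
  have hi₃φ : i₃ ≫ φ.hom₃ = i₃ := by rw [← hri₃, reassoc_of% hir₃]
  have hφr₁ : φ.hom₁ ≫ r₁ = r₁ := by rw [← hri₁, Category.assoc, hir₁, Category.comp_id]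
  obtain ⟨Y, u, v, hY⟩ := distinguished_cocone_triangle₂ (i₃ ≫ T.mor₃ ≫ r₁⟦(1 : ℤ)⟧')
  obtain ⟨s, hs₁, hs₂⟩ : ∃ s : Y ⟶ T.obj₂, u ≫ s = i₁ ≫ T.mor₁ ∧ v ≫ i₃ = s ≫ T.mor₂ :=
    complete_distinguished_triangle_morphism₂ _ _ hY hT i₁ i₃ (by
      show (i₃ ≫ T.mor₃ ≫ r₁⟦(1 : ℤ)⟧') ≫ i₁⟦(1 : ℤ)⟧' = i₃ ≫ T.mor₃
      rw [Category.assoc, Category.assoc, ← Functor.map_comp, hri₁, φ.comm₃, reassoc_of% hi₃φ])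
  obtain ⟨r, hr₁, hr₂⟩ : ∃ r : T.obj₂ ⟶ Y, T.mor₁ ≫ r = r₁ ≫ u ∧ T.mor₂ ≫ r₃ = r ≫ v :=
    complete_distinguished_triangle_morphism₂ _ _ hT hY r₁ r₃ (by
      show T.mor₃ ≫ r₁⟦(1 : ℤ)⟧' = r₃ ≫ i₃ ≫ T.mor₃ ≫ r₁⟦(1 : ℤ)⟧'
      rw [reassoc_of% hri₃, ← reassoc_of% φ.comm₃, ← Functor.map_comp, hφr₁])
  have hu : u ≫ s ≫ r = u := by rw [reassoc_of% hs₁, hr₁, reassoc_of% hir₁]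
  have hv : (s ≫ r) ≫ v = v := by
    rw [Category.assoc, ← hr₂, ← reassoc_of% hs₂, hir₃, Category.comp_id]
  let TY := Triangle.mk u v (i₃ ≫ T.mor₃ ≫ r₁⟦(1 : ℤ)⟧')
  let ψ : TY ⟶ TY := Triangle.homMk _ _ (𝟙 _) (s ≫ r) (𝟙 _)
    (hu.trans (Category.id_comp u).symm) ((Category.comp_id v).trans hv.symm) (by simp)
  have : IsIso (s ≫ r) := isIso₂_of_isIso₁₃ ψ hY hY (IsIso.id _) (IsIso.id _)
  have hu' : u ≫ inv (s ≫ r) = u := by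
    rw [← cancel_mono (s ≫ r), Category.assoc, IsIso.inv_hom_id, Category.comp_id, hu]
  have hv' : inv (s ≫ r) ≫ v = v := by rw [← cancel_epi (s ≫ r), IsIso.hom_inv_id_assoc, hv]
  refine ⟨r ≫ inv (s ≫ r) ≫ s,
    ⟨Y, s, r ≫ inv (s ≫ r), by rw [← Category.assoc, IsIso.hom_inv_id], Category.assoc _ _ _⟩,
    ?_, ?_⟩
  · rw [reassoc_of% hr₁, reassoc_of% hu', hs₁, reassoc_of% hri₁]
  · rw [Category.assoc, Category.assoc, ← hs₂, reassoc_of% hv', ← reassoc_of% hr₂, hri₃]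

lemma isSplitIdempotent_hom₂ (φ : T ⟶ T) (hφ : φ.hom₂ ≫ φ.hom₂ = φ.hom₂)
    (h₁ : IsSplitIdempotent φ.hom₁) (h₃ : IsSplitIdempotent φ.hom₃) :
    IsSplitIdempotent φ.hom₂ := by
  obtain ⟨e, he, he₁, he₂⟩ := exists_isSplitIdempotent_of_hom₁_hom₃ hT φ h₁ h₃
  refine he.of_sub_comp_self_eq_zero hφ (comp_self_eq_zero hT ?_ ?_)
  · rw [Preadditive.comp_sub, he₁, φ.comm₁, sub_self]
  · rw [Preadditive.sub_comp, he₂, φ.comm₂, sub_self]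

end Pretriangulated.Triangle

namespace Triangulated.TStructure

variable (t : TStructure C)

lemma isSplitIdempotent_of_isLE_of_isGE {X : C} (a : ℤ) [t.IsLE X a] [t.IsGE X a]
    {p : X ⟶ X} (hp : p ≫ p = p) : IsSplitIdempotent p := by
  obtain ⟨Z, α, w, hZ⟩ := distinguished_cocone_triangle₁ (𝟙 X - p)
  obtain ⟨u, hu⟩ : ∃ u : X ⟶ Z, p = u ≫ α := Triangle.coyoneda_exact₂ _ hZ p (by
    show p ≫ (𝟙 X - p) = 0
    rw [Preadditive.comp_sub, Category.comp_id, hp, sub_self])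
  obtain ⟨K, Q, hK, hQ, ι, π, δ, hKQ⟩ := t.exists_triangle Z a (a + 1) rfl
  have : t.IsLE K a := ⟨hK⟩
  have : t.IsGE Q (a + 1) := ⟨hQ⟩
  obtain ⟨q, hq⟩ : ∃ q : X ⟶ K, u = q ≫ ι :=
    Triangle.coyoneda_exact₂ _ hKQ u (t.zero (u ≫ π) a (a + 1))
  have hα : α ≫ (𝟙 X - p) = 0 := comp_distTriang_mor_zero₁₂ _ hZ
  rw [Preadditive.comp_sub, Category.comp_id, sub_eq_zero] at hα
  refine IsSplitIdempotent.of_factorization (ι ≫ α) q (by rw [← Category.assoc, ← hq, hu])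
    (by rw [Category.assoc, ← hα]) fun g hg => ?_
  have hgι : g ≫ ι = 0 := Triangle.eq_zero_of_comp_mor₁_eq_zero hZ
    (fun f => t.zero_of_isLE_of_isGE f a (a + 1) (by omega) inferInstance
      (t.isGE_shift X a (-1) (a + 1)))
    ((Category.assoc g ι α).trans hg)
  exact Triangle.eq_zero_of_comp_mor₁_eq_zero hKQ
    (fun f => t.zero_of_isLE_of_isGE f a (a + 2) (by omega) inferInstance
      (t.isGE_shift Q (a + 1) (-1) (a + 2)))
    hgι

lemma isSplitIdempotent_of_isGE_of_isLE_add (k : ℕ) :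
    ∀ {X : C} (a : ℤ) [t.IsGE X a] [t.IsLE X (a + k)] {p : X ⟶ X}, p ≫ p = p →
      IsSplitIdempotent p := by
  induction k with
  | zero =>
    intro X a _ _ p hp
    have : t.IsLE X a := t.isLE_of_le X (a + (0 : ℕ)) a
    exact t.isSplitIdempotent_of_isLE_of_isGE a hp
  | succ k ih =>
    intro X a _ _ p hp
    let n := a + (k + 1 : ℕ)
    let T := (t.triangleLTGE n).obj X
    have hT : T ∈ distTriang C := t.triangleLTGE_distinguished n X
    let φ := (t.triangleLTGE n).map p
    have hφ : φ ≫ φ = φ := by rw [← Functor.map_comp, hp]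
    have : t.IsLE T.obj₁ (a + k) := t.isLE_of_le _ (n - 1) _
    have : t.IsGE T.obj₁ a := by
      have := t.isGE_shift T.obj₃ n (-1) (n + 1)
      exact t.isGE₂ _ (inv_rot_of_distTriang _ hT) a
        (t.isGE_of_ge (T.obj₃⟦(-1 : ℤ)⟧) a (n + 1)) ‹t.IsGE X a›
    have : t.IsLE T.obj₃ n := by
      have := t.isLE_shift T.obj₁ (n - 1) 1 (n - 2)
      exact t.isLE₂ _ (rot_of_distTriang _ hT) n ‹t.IsLE X n›
        (t.isLE_of_le (T.obj₁⟦(1 : ℤ)⟧) (n - 2) n)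
    exact Triangle.isSplitIdempotent_hom₂ hT φ (congrArg TriangleMorphism.hom₂ hφ)
      (ih a (congrArg TriangleMorphism.hom₁ hφ))
      (t.isSplitIdempotent_of_isLE_of_isGE n (congrArg TriangleMorphism.hom₃ hφ))

lemma isIdempotentComplete_of_forall_bounded (h : ∀ X : C, t.bounded X) :
    IsIdempotentComplete C := by
  refine ⟨fun X p hp => ?_⟩
  obtain ⟨⟨a, _⟩, ⟨b, _⟩⟩ := h X
  have : t.IsLE X (a + (b - a).toNat) := t.isLE_of_le X b _
  exact t.isSplitIdempotent_of_isGE_of_isLE_add (b - a).toNat a hp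

end Triangulated.TStructure

end CategoryTheory

namespace Stmt4

open Triangulated

variable {C : Type*} [Category* C] [HasZeroObject C] [Preadditive C] [HasShift C ℤ]
  [∀ n : ℤ, (shiftFunctor C n).Additive] [Pretriangulated C] {L G : Set C}

def IsTStructure.toTStructure (h : IsTStructure L G) : TStructure C where
  le n X := X⟦n⟧ ∈ L
  ge n X := X⟦n⟧ ∈ G
  le_isClosedUnderIsomorphisms n :=
    ⟨fun e hX => h.aisle_iso_closed ((shiftFunctor C n).mapIso e) hX⟩
  ge_isClosedUnderIsomorphisms n :=
    ⟨fun e hX => h.coaisle_iso_closed ((shiftFunctor C n).mapIso e) hX⟩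
  le_shift n a n' hn X hX := h.aisle_iso_closed ((shiftFunctorAdd' C a n' n hn).app X) hX
  ge_shift n a n' hn X hX := h.coaisle_iso_closed ((shiftFunctorAdd' C a n' n hn).app X) hX
  zero' X Y f hX hY := by
    let e₁ := (shiftFunctorZero C ℤ).app X
    let e₂ := (shiftFunctorCompIsoId C (1 : ℤ) (-1) (by omega)).app Y
    have := h.hom_vanish _ _ hX hY (e₁.hom ≫ f ≫ e₂.inv)
    rwa [← cancel_epi e₁.hom, ← cancel_mono e₂.inv, comp_zero, zero_comp, Category.assoc]
  le_zero_le X hX :=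
    h.aisle_iso_closed ((shiftFunctorAdd' C 0 1 1 (zero_add 1)).app X).symm (h.shift_aisle _ hX)
  ge_one_le X hX :=
    h.coaisle_iso_closed ((shiftFunctorAdd' C 1 (-1) 0 (by omega)).app X).symm
      (h.shift_coaisle _ hX)
  exists_triangle_zero_one A := by
    obtain ⟨M', M'', f, g, δ, hM', hM'', hT⟩ := h.exists_triangle A
    exact ⟨M', M'', h.aisle_iso_closed ((shiftFunctorZero C ℤ).app M').symm hM', hM'',
      f, g, δ, hT⟩

end Stmt4

theorem stmt4 {C : Type u} [Category.{v} C] [HasZeroObject C] [Preadditive C] [HasShift C ℤ]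
    [∀ n : ℤ, (shiftFunctor C n).Additive] [Pretriangulated C]
    (L G : Set C) (h : IsTStructure L G) (hb : IsBoundedTStructure L G) :
    IsIdempotentComplete C :=
  h.toTStructure.isIdempotentComplete_of_forall_bounded fun X =>
    ⟨(hb.2 X).imp fun _ hn => ⟨hn⟩, (hb.1 X).imp fun _ hn => ⟨hn⟩⟩
end

section
/- A bounded t-structure on a triangulated category C is determined by its heart: if two bounded t-structures on C have the same heart, they are equal. Moreover, the aisle C^{≤0} of a bounded t-structure is the smallest strict full subcategory of C containing the heart and closed under Σ, extensions and direct summands, and the co-aisle C^{≥0} is the smallest strict full subcategory containing the heart and closed under Σ⁻¹, extensions and direct summands. -/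
/-!
STATEMENT 6.
A bounded t-structure is determined by its heart; moreover the aisle is the smallest
strict full subcategory containing the heart and closed under `Σ`, extensions and direct
summands, and dually for the co-aisle.
-/

open CategoryTheory Limits Pretriangulated

namespace Stmt6

variable {C : Type u} [Category.{v} C] [HasZeroObject C] [Preadditive C] [HasShift C ℤ]
  [∀ n : ℤ, (shiftFunctor C n).Additive] [Pretriangulated C]

/-- A t-structure on `C` given by its aisle `L` and co-aisle `G`. -/
structure IsTStructure (L G : Set C) : Prop where
  aisle_iso_closed : ∀ ⦃X Y : C⦄, (X ≅ Y) → X ∈ L → Y ∈ L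
  coaisle_iso_closed : ∀ ⦃X Y : C⦄, (X ≅ Y) → X ∈ G → Y ∈ G
  shift_aisle : ∀ X ∈ L, (X⟦(1 : ℤ)⟧) ∈ L
  shift_coaisle : ∀ X ∈ G, (X⟦(-1 : ℤ)⟧) ∈ G
  hom_vanish : ∀ (X Y : C), X ∈ L → Y ∈ G → ∀ f : X ⟶ (Y⟦(-1 : ℤ)⟧), f = 0
  exists_triangle : ∀ X : C, ∃ (M' M'' : C) (f : M' ⟶ X) (g : X ⟶ M'')
    (h : M'' ⟶ M'⟦(1 : ℤ)⟧), M' ∈ L ∧ (M''⟦(1 : ℤ)⟧) ∈ G ∧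
      Triangle.mk f g h ∈ distTriang C

/-- Boundedness of a t-structure `(L, G)`. -/
def IsBoundedTStructure (L G : Set C) : Prop :=
  (∀ X : C, ∃ n : ℤ, (X⟦n⟧) ∈ L) ∧ (∀ X : C, ∃ n : ℤ, (X⟦n⟧) ∈ G)

/-- `S` is a strict full subcategory closed under the given shift `n`, extensions and
direct summands. -/
structure IsClosedShiftExtSummands (S : Set C) (n : ℤ) : Prop where
  iso_closed : ∀ ⦃X Y : C⦄, (X ≅ Y) → X ∈ S → Y ∈ S
  shift : ∀ X ∈ S, (X⟦n⟧) ∈ S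
  ext : ∀ (X Y Z : C) (f : X ⟶ Y) (g : Y ⟶ Z) (h : Z ⟶ X⟦(1 : ℤ)⟧),
    Triangle.mk f g h ∈ (distTriang C) → X ∈ S → Z ∈ S → Y ∈ S
  summand : ∀ (X Y : C) (s : X ⟶ Y) (r : Y ⟶ X), s ≫ r = 𝟙 X → Y ∈ S → X ∈ S

end Stmt6

open Stmt6

/-!
Each half of a t-structure is the orthogonal of the other (`X ∈ L` iff `Hom(X, Y) = 0` whenever
`Y⟦1⟧ ∈ G`, and dually), which makes `L` and `G` closed under extensions and summands, and reduces
uniqueness to the minimality statements. For minimality, boundedness gives every `X ∈ L` some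
`d` with `X⟦-d⟧ ∈ G`, i.e. cohomology in `[-d, 0]`; truncating exhibits `X` as an
extension of a heart object by the `Σ`-shift of an object of smaller amplitude, and induction on
`d` concludes. The co-aisle is dual.
-/

namespace Stmt6

section Shift

variable {C : Type u} [Category.{v} C] [HasShift C ℤ] {S : Set C}

lemma mem_shift_shift_iff (hS : ∀ ⦃X Y : C⦄, (X ≅ Y) → X ∈ S → Y ∈ S) (X : C) (a b : ℤ) :
    X⟦a⟧⟦b⟧ ∈ S ↔ X⟦a + b⟧ ∈ S :=
  ⟨hS ((shiftFunctorAdd C a b).app X).symm, hS ((shiftFunctorAdd C a b).app X)⟩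

lemma mem_shift_zero_iff (hS : ∀ ⦃X Y : C⦄, (X ≅ Y) → X ∈ S → Y ∈ S) (X : C) :
    X⟦(0 : ℤ)⟧ ∈ S ↔ X ∈ S :=
  ⟨hS ((shiftFunctorZero C ℤ).app X), hS ((shiftFunctorZero C ℤ).app X).symm⟩

lemma shift_mem_of_shift_mem (hS : ∀ ⦃X Y : C⦄, (X ≅ Y) → X ∈ S → Y ∈ S) {k : ℤ}
    (hk : ∀ X ∈ S, X⟦k⟧ ∈ S) {X : C} {a : ℤ} (hX : X⟦a⟧ ∈ S) (n : ℕ) :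
    X⟦a + n * k⟧ ∈ S := by
  induction n with
  | zero => simpa using hX
  | succ n ih =>
    have h := hk _ ih
    rwa [mem_shift_shift_iff hS, show a + n * k + k = a + (n + 1 : ℕ) * k by push_cast; ring] at h

end Shift

variable {C : Type u} [Category.{v} C] [HasZeroObject C] [Preadditive C] [HasShift C ℤ]
  [∀ n : ℤ, (shiftFunctor C n).Additive] [Pretriangulated C] {L G : Set C}

lemma exists_distTriang_of_iso_obj₂ {T : Triangle C} (hT : T ∈ distTriang C) {X : C}
    (e : T.obj₂ ≅ X) : ∃ (f : T.obj₁ ⟶ X) (g : X ⟶ T.obj₃), Triangle.mk f g T.mor₃ ∈ distTriang C :=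
  ⟨T.mor₁ ≫ e.hom, e.inv ≫ T.mor₂, isomorphic_distinguished _ hT _
    (Triangle.isoMk _ _ (Iso.refl _) e.symm (Iso.refl _) (by simp [Triangle.mk])
      (by simp [Triangle.mk]) (by simp [Triangle.mk]))⟩

namespace IsTStructure

lemma shift_mem_aisle_of_le (h : IsTStructure L G) {X : C} {a b : ℤ} (hab : a ≤ b)
    (hX : X⟦a⟧ ∈ L) : X⟦b⟧ ∈ L := by
  obtain ⟨n, rfl⟩ := Int.le.dest hab
  simpa using shift_mem_of_shift_mem h.aisle_iso_closed h.shift_aisle hX n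

lemma shift_mem_coaisle_of_le (h : IsTStructure L G) {X : C} {a b : ℤ} (hab : a ≤ b)
    (hX : X⟦b⟧ ∈ G) : X⟦a⟧ ∈ G := by
  obtain ⟨n, rfl⟩ := Int.le.dest hab
  simpa using shift_mem_of_shift_mem h.coaisle_iso_closed h.shift_coaisle hX n

lemma mem_coaisle_of_shift_mem (h : IsTStructure L G) {X : C} {a : ℤ} (ha : 0 ≤ a)
    (hX : X⟦a⟧ ∈ G) : X ∈ G :=
  (mem_shift_zero_iff h.coaisle_iso_closed X).1 (h.shift_mem_coaisle_of_le ha hX)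

lemma hom_eq_zero (h : IsTStructure L G) {X Y : C} (hX : X ∈ L) (hY : Y⟦(1 : ℤ)⟧ ∈ G)
    (f : X ⟶ Y) : f = 0 := by
  let e : Y ≅ Y⟦(1 : ℤ)⟧⟦(-1 : ℤ)⟧ := ((shiftFunctorCompIsoId C (1 : ℤ) (-1) (by simp)).app Y).symm
  rw [← cancel_mono e.hom, zero_comp]
  exact h.hom_vanish _ _ hX hY _

lemma mem_aisle_iff (h : IsTStructure L G) (X : C) :
    X ∈ L ↔ ∀ Y : C, Y⟦(1 : ℤ)⟧ ∈ G → ∀ f : X ⟶ Y, f = 0 := by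
  refine ⟨fun hX Y hY f => h.hom_eq_zero hX hY f, fun hX => ?_⟩
  obtain ⟨A, B, a, b, c, hA, hB, hT⟩ := h.exists_triangle X
  obtain ⟨u, hu⟩ := Triangle.yoneda_exact₃ _ hT (𝟙 B)
    ((Category.comp_id b).trans (hX B hB b))
  have hBz : IsZero B := by
    rw [IsZero.iff_id_eq_zero, hu, h.hom_eq_zero (h.shift_aisle _ hA) hB u]
    exact comp_zero
  have : IsIso a := (Triangle.isZero₃_iff_isIso₁ _ hT).1 hBz
  exact h.aisle_iso_closed (asIso a) hA

lemma mem_coaisle_iff (h : IsTStructure L G) (Y : C) :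
    Y ∈ G ↔ ∀ X ∈ L, ∀ f : X ⟶ Y⟦(-1 : ℤ)⟧, f = 0 := by
  refine ⟨fun hY X hX f => h.hom_vanish _ _ hX hY f, fun hY => ?_⟩
  obtain ⟨A, B, a, b, c, hA, hB, hT⟩ := h.exists_triangle (Y⟦(-1 : ℤ)⟧)
  obtain ⟨u, hu⟩ := Triangle.coyoneda_exact₂ _ (inv_rot_of_distTriang _ hT) (𝟙 A)
    ((Category.id_comp a).trans (hY A hA a))
  have hAz : IsZero A := by
    rw [IsZero.iff_id_eq_zero, hu,
      h.hom_vanish _ _ hA (h.mem_coaisle_of_shift_mem zero_le_one hB) u]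
    exact zero_comp
  have : IsIso b := (Triangle.isZero₁_iff_isIso₂ _ hT).1 hAz
  have hY' : Y⟦(-1 : ℤ)⟧⟦(1 : ℤ)⟧ ∈ G :=
    h.coaisle_iso_closed ((shiftFunctor C (1 : ℤ)).mapIso (asIso b)).symm hB
  rw [mem_shift_shift_iff h.coaisle_iso_closed] at hY'
  exact (mem_shift_zero_iff h.coaisle_iso_closed Y).1 hY'

lemma mem_aisle_of_distTriang (h : IsTStructure L G) {T : Triangle C} (hT : T ∈ distTriang C)
    (h₁ : T.obj₁ ∈ L) (h₃ : T.obj₃ ∈ L) : T.obj₂ ∈ L := by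
  refine (h.mem_aisle_iff _).2 fun Y hY f => ?_
  obtain ⟨u, rfl⟩ := Triangle.yoneda_exact₂ _ hT f (h.hom_eq_zero h₁ hY _)
  rw [h.hom_eq_zero h₃ hY u, comp_zero]

lemma mem_coaisle_of_distTriang (h : IsTStructure L G) {T : Triangle C}
    (hT : T ∈ distTriang C) (h₁ : T.obj₁ ∈ G) (h₃ : T.obj₃ ∈ G) : T.obj₂ ∈ G := by
  refine (h.mem_coaisle_iff _).2 fun X hX f => ?_
  obtain ⟨u, rfl⟩ := Triangle.coyoneda_exact₂ _ (Triangle.shift_distinguished T hT (-1)) f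
    (h.hom_vanish _ _ hX h₃ _)
  rw [h.hom_vanish _ _ hX h₁ u]
  exact zero_comp

lemma isClosedShiftExtSummands_aisle (h : IsTStructure L G) : IsClosedShiftExtSummands L 1 where
  iso_closed := h.aisle_iso_closed
  shift := h.shift_aisle
  ext _ _ _ f g k hT := h.mem_aisle_of_distTriang (T := Triangle.mk f g k) hT
  summand X Y s r hsr hY := (h.mem_aisle_iff X).2 fun W hW f => by
    rw [← Category.id_comp f, ← hsr, Category.assoc, h.hom_eq_zero hY hW (r ≫ f), comp_zero]

lemma isClosedShiftExtSummands_coaisle (h : IsTStructure L G) :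
    IsClosedShiftExtSummands G (-1) where
  iso_closed := h.coaisle_iso_closed
  shift := h.shift_coaisle
  ext _ _ _ f g k hT := h.mem_coaisle_of_distTriang (T := Triangle.mk f g k) hT
  summand X Y s r hsr hY := (h.mem_coaisle_iff X).2 fun W hW f => by
    rw [← Category.comp_id f, ← (shiftFunctor C (-1)).map_id X, ← hsr, Functor.map_comp,
      ← Category.assoc, h.hom_vanish _ _ hW hY (f ≫ s⟦(-1 : ℤ)⟧'), zero_comp]

lemma eq_of_subset {L' G' : Set C} (h : IsTStructure L G) (h' : IsTStructure L' G')
    (hL : L ⊆ L') (hG : G ⊆ G') : L = L' ∧ G = G' :=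
  ⟨hL.antisymm fun X hX => (h.mem_aisle_iff X).2 fun _ hY f => h'.hom_eq_zero hX (hG hY) f,
    hG.antisymm fun Y hY => (h.mem_coaisle_iff Y).2 fun X hX f => h'.hom_vanish X Y (hL hX) hY f⟩

lemma exists_distTriang_truncation (h : IsTStructure L G) (X : C) (n : ℤ) :
    ∃ (A B : C) (f : A ⟶ X) (g : X ⟶ B) (k : B ⟶ A⟦(1 : ℤ)⟧),
      A⟦n⟧ ∈ L ∧ B⟦n + 1⟧ ∈ G ∧ Triangle.mk f g k ∈ distTriang C := by
  obtain ⟨A, B, f, g, k, hA, hB, hT⟩ := h.exists_triangle (X⟦n⟧)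
  obtain ⟨f', g', hT'⟩ := exists_distTriang_of_iso_obj₂ (Triangle.shift_distinguished _ hT (-n))
    ((shiftFunctorCompIsoId C n (-n) (add_neg_cancel n)).app X)
  refine ⟨A⟦-n⟧, B⟦-n⟧, f', g', _, ?_, ?_, hT'⟩
  · rwa [mem_shift_shift_iff h.aisle_iso_closed, neg_add_cancel,
      mem_shift_zero_iff h.aisle_iso_closed]
  · rwa [mem_shift_shift_iff h.coaisle_iso_closed, neg_add_cancel_left]

/-- Such an `X` has cohomology in `[-d, 0]`. Its truncation triangle `A → X → B` at level `-1`
has `B` in the heart and `A = (A⟦-1⟧)⟦1⟧` with `A⟦-1⟧` of cohomology in `[-(d - 1), 0]`. -/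
lemma mem_of_mem_aisle_of_shift_mem_coaisle (h : IsTStructure L G) {S : Set C}
    (hS : IsClosedShiftExtSummands S 1) (hLG : L ∩ G ⊆ S) (d : ℕ) :
    ∀ X ∈ L, X⟦-(d : ℤ)⟧ ∈ G → X ∈ S := by
  induction d with
  | zero =>
    intro X hXL hXG
    exact hLG ⟨hXL, h.mem_coaisle_of_shift_mem le_rfl (by simpa using hXG)⟩
  | succ d ih =>
    intro X hXL hXG
    obtain ⟨A, B, f, g, k, hA, hB, hT⟩ := h.exists_distTriang_truncation X (-1)
    have hBG : B ∈ G := h.mem_coaisle_of_shift_mem (by norm_num) hB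
    have hBL : B ∈ L := h.mem_aisle_of_distTriang (rot_of_distTriang _ hT) hXL
      (h.shift_mem_aisle_of_le (by norm_num) hA)
    have hA' : A⟦(-1 : ℤ)⟧⟦-(d : ℤ)⟧ ∈ G := by
      rw [mem_shift_shift_iff h.coaisle_iso_closed]
      refine h.mem_coaisle_of_distTriang
        (Triangle.shift_distinguished _ (inv_rot_of_distTriang _ hT) (-1 + -d)) ?_ ?_
      · exact (mem_shift_shift_iff h.coaisle_iso_closed B (-1) (-1 + -d)).2
          (h.shift_mem_coaisle_of_le (b := 0) (by omega)
            ((mem_shift_zero_iff h.coaisle_iso_closed B).2 hBG))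
      · exact h.shift_mem_coaisle_of_le (by push_cast; omega) hXG
    have hAS : A ∈ S := hS.iso_closed ((shiftFunctorCompIsoId C (-1 : ℤ) 1 (by norm_num)).app A)
      (hS.shift _ (ih _ hA hA'))
    exact hS.ext _ _ _ f g k hT hAS (hLG ⟨hBL, hBG⟩)

/-- Dually, the truncation triangle `A → X → B` at level `0` has `A` in the heart and
`B = (B⟦1⟧)⟦-1⟧` with `B⟦1⟧` of cohomology in `[0, d - 1]`. -/
lemma mem_of_mem_coaisle_of_shift_mem_aisle (h : IsTStructure L G) {S : Set C}
    (hS : IsClosedShiftExtSummands S (-1)) (hLG : L ∩ G ⊆ S) (d : ℕ) :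
    ∀ X ∈ G, X⟦(d : ℤ)⟧ ∈ L → X ∈ S := by
  induction d with
  | zero =>
    intro X hXG hXL
    exact hLG ⟨(mem_shift_zero_iff h.aisle_iso_closed X).1 (by simpa using hXL), hXG⟩
  | succ d ih =>
    intro X hXG hXL
    obtain ⟨A, B, f, g, k, hA, hB, hT⟩ := h.exists_triangle X
    have hAG : A ∈ G := h.mem_coaisle_of_distTriang (inv_rot_of_distTriang _ hT)
      (h.shift_mem_coaisle_of_le (by norm_num) hB) hXG
    have hB' : B⟦(1 : ℤ)⟧⟦(d : ℤ)⟧ ∈ L := by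
      rw [mem_shift_shift_iff h.aisle_iso_closed]
      refine h.mem_aisle_of_distTriang
        (Triangle.shift_distinguished _ (rot_of_distTriang _ hT) (1 + d)) ?_ ?_
      · exact h.shift_mem_aisle_of_le (by push_cast; omega) hXL
      · exact (mem_shift_shift_iff h.aisle_iso_closed A 1 (1 + d)).2
          (h.shift_mem_aisle_of_le (a := 0) (by omega)
            ((mem_shift_zero_iff h.aisle_iso_closed A).2 hA))
    have hBS : B ∈ S := hS.iso_closed ((shiftFunctorCompIsoId C (1 : ℤ) (-1) (by norm_num)).app B)
      (hS.shift _ (ih _ hB hB'))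
    exact hS.ext _ _ _ f g k hT (hLG ⟨hA, hAG⟩) hBS

lemma aisle_subset (h : IsTStructure L G) (hG : ∀ X : C, ∃ n : ℤ, X⟦n⟧ ∈ G) {S : Set C}
    (hS : IsClosedShiftExtSummands S 1) (hLG : L ∩ G ⊆ S) : L ⊆ S := fun X hX => by
  obtain ⟨n, hn⟩ := hG X
  exact h.mem_of_mem_aisle_of_shift_mem_coaisle hS hLG (-n).toNat X hX
    (h.shift_mem_coaisle_of_le (by omega) hn)

lemma coaisle_subset (h : IsTStructure L G) (hL : ∀ X : C, ∃ n : ℤ, X⟦n⟧ ∈ L) {S : Set C}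
    (hS : IsClosedShiftExtSummands S (-1)) (hLG : L ∩ G ⊆ S) : G ⊆ S := fun X hX => by
  obtain ⟨n, hn⟩ := hL X
  exact h.mem_of_mem_coaisle_of_shift_mem_aisle hS hLG n.toNat X hX
    (h.shift_mem_aisle_of_le (by omega) hn)

end IsTStructure

end Stmt6

theorem stmt6 {C : Type u} [Category.{v} C] [HasZeroObject C] [Preadditive C] [HasShift C ℤ]
    [∀ n : ℤ, (shiftFunctor C n).Additive] [Pretriangulated C]
    (L G L' G' : Set C) (h : IsTStructure L G) (hb : IsBoundedTStructure L G)
    (h' : IsTStructure L' G') (hb' : IsBoundedTStructure L' G') :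
    (L ∩ G = L' ∩ G' → L = L' ∧ G = G') ∧
    (IsClosedShiftExtSummands L 1 ∧ L ∩ G ⊆ L ∧
      ∀ S : Set C, IsClosedShiftExtSummands S 1 → L ∩ G ⊆ S → L ⊆ S) ∧
    (IsClosedShiftExtSummands G (-1) ∧ L ∩ G ⊆ G ∧
      ∀ S : Set C, IsClosedShiftExtSummands S (-1) → L ∩ G ⊆ S → G ⊆ S) := by
  refine ⟨fun hLG => h.eq_of_subset h'
      (h.aisle_subset hb.2 h'.isClosedShiftExtSummands_aisle (hLG ▸ Set.inter_subset_left))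
      (h.coaisle_subset hb.1 h'.isClosedShiftExtSummands_coaisle (hLG ▸ Set.inter_subset_right)),
    ⟨h.isClosedShiftExtSummands_aisle, Set.inter_subset_left, fun _ => h.aisle_subset hb.2⟩,
    ⟨h.isClosedShiftExtSummands_coaisle, Set.inter_subset_right, fun _ => h.coaisle_subset hb.1⟩⟩
end

section
/- Let (C^{≤0}, C^{≥0}) and (C'^{≤0}, C'^{≥0}) be two bounded t-structures on a triangulated category C. Then (C'^{≤0}, C'^{≥0}) is intermediate with respect to (C^{≤0}, C^{≥0}), i.e. ΣC^{≤0} ⊆ C'^{≤0} ⊆ C^{≤0}, if and only if the heart C'^{≤0} ∩ C'^{≥0} is contained in C^{≤0} ∩ ΣC^{≥0}. -/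
/-!
STATEMENT 7.
For two bounded t-structures `(C^{≤0}, C^{≥0})` and `(C'^{≤0}, C'^{≥0})` on `C`, the
second is intermediate with respect to the first (`ΣC^{≤0} ⊆ C'^{≤0} ⊆ C^{≤0}`) if and
only if its heart is contained in `C^{≤0} ∩ ΣC^{≥0}`.
(Here `X ∈ ΣS` iff `Σ⁻¹X ∈ S`, `S` being strict.)
-/

open CategoryTheory Limits Pretriangulated

namespace Stmt7

variable {C : Type u} [Category.{v} C] [HasZeroObject C] [Preadditive C] [HasShift C ℤ]
  [∀ n : ℤ, (shiftFunctor C n).Additive] [Pretriangulated C]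

/-- A t-structure on `C` given by its aisle `L` and co-aisle `G`. -/
structure IsTStructure (L G : Set C) : Prop where
  aisle_iso_closed : ∀ ⦃X Y : C⦄, (X ≅ Y) → X ∈ L → Y ∈ L
  coaisle_iso_closed : ∀ ⦃X Y : C⦄, (X ≅ Y) → X ∈ G → Y ∈ G
  shift_aisle : ∀ X ∈ L, (X⟦(1 : ℤ)⟧) ∈ L
  shift_coaisle : ∀ X ∈ G, (X⟦(-1 : ℤ)⟧) ∈ G
  hom_vanish : ∀ (X Y : C), X ∈ L → Y ∈ G → ∀ f : X ⟶ (Y⟦(-1 : ℤ)⟧), f = 0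
  exists_triangle : ∀ X : C, ∃ (M' M'' : C) (f : M' ⟶ X) (g : X ⟶ M'')
    (h : M'' ⟶ M'⟦(1 : ℤ)⟧), M' ∈ L ∧ (M''⟦(1 : ℤ)⟧) ∈ G ∧
      Triangle.mk f g h ∈ distTriang C

/-- Boundedness of a t-structure `(L, G)`. -/
def IsBoundedTStructure (L G : Set C) : Prop :=
  (∀ X : C, ∃ n : ℤ, (X⟦n⟧) ∈ L) ∧ (∀ X : C, ∃ n : ℤ, (X⟦n⟧) ∈ G)

/-- The shift `Σ S` of a strict full subcategory `S`. -/
def shiftSet (S : Set C) : Set C := {X : C | (X⟦(-1 : ℤ)⟧) ∈ S}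

end Stmt7

/-!
Aisles and co-aisles are each other's orthogonals, which makes `ΣL ⊆ L'` equivalent to
`G' ⊆ ΣG`; with this the forward implication is immediate. Conversely, let the heart of
`(L', G')` lie in `L ∩ ΣG`. Truncating once, an object of `L'` is an extension of a heart object
by `ΣA` with `A ∈ L'` of smaller amplitude, so, `L` being closed under `Σ` and extensions,
boundedness of `(L', G')` gives `L' ⊆ L` by induction on the amplitude. Dually `G' ⊆ ΣG`,
hence `ΣL ⊆ L'`.
-/

namespace Stmt7

section IsoClosed

variable {C : Type*} [Category C] [HasShift C ℤ] {S : Set C}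
  (hS : ∀ ⦃X Y : C⦄, (X ≅ Y) → X ∈ S → Y ∈ S)
include hS

lemma shift_zero_mem_iff (X : C) : X⟦(0 : ℤ)⟧ ∈ S ↔ X ∈ S :=
  ⟨hS ((shiftFunctorZero C ℤ).app X), hS ((shiftFunctorZero C ℤ).app X).symm⟩

lemma shift_shift_mem_iff (X : C) {a b c : ℤ} (habc : a + b = c) :
    X⟦a⟧⟦b⟧ ∈ S ↔ X⟦c⟧ ∈ S :=
  ⟨hS ((shiftFunctorAdd' C a b c habc).app X).symm, hS ((shiftFunctorAdd' C a b c habc).app X)⟩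

lemma shift_shift_mem_iff_of_add_eq_zero (X : C) {a b : ℤ} (hab : a + b = 0) :
    X⟦a⟧⟦b⟧ ∈ S ↔ X ∈ S :=
  ⟨hS ((shiftFunctorCompIsoId C a b hab).app X),
    hS ((shiftFunctorCompIsoId C a b hab).app X).symm⟩

end IsoClosed

variable {C : Type u} [Category.{v} C] [HasZeroObject C] [Preadditive C] [HasShift C ℤ]
  [∀ n : ℤ, (shiftFunctor C n).Additive] [Pretriangulated C]

namespace IsTStructure

variable {L G : Set C} (h : IsTStructure L G)
include h

lemma shift_mem_aisle_of_le {X : C} {a b : ℤ} (ha : X⟦a⟧ ∈ L) (hab : a ≤ b) : X⟦b⟧ ∈ L := by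
  obtain ⟨n, rfl⟩ : ∃ n : ℕ, b = a + n := ⟨(b - a).toNat, by omega⟩
  induction n with
  | zero => simpa using ha
  | succ n ih =>
    exact (shift_shift_mem_iff h.aisle_iso_closed X (by push_cast; ring)).1
      (h.shift_aisle _ (ih (by omega)))

lemma shift_mem_coaisle_of_le {X : C} {a b : ℤ} (ha : X⟦a⟧ ∈ G) (hba : b ≤ a) : X⟦b⟧ ∈ G := by
  obtain ⟨n, rfl⟩ : ∃ n : ℕ, b = a - n := ⟨(a - b).toNat, by omega⟩
  induction n with
  | zero => simpa using ha
  | succ n ih =>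
    exact (shift_shift_mem_iff h.coaisle_iso_closed X (by push_cast; ring)).1
      (h.shift_coaisle _ (ih (by omega)))

lemma hom_eq_zero_of_lt {X Y : C} {a b : ℤ} (ha : X⟦a⟧ ∈ L) (hb : Y⟦b⟧ ∈ G) (hab : a < b)
    (f : X ⟶ Y) : f = 0 := by
  have hY : Y⟦a + 1⟧ ∈ G := h.shift_mem_coaisle_of_le hb (by omega)
  let e : Y⟦a⟧ ≅ Y⟦a + 1⟧⟦(-1 : ℤ)⟧ := (shiftFunctorAdd' C (a + 1) (-1) a (by ring)).app Y
  have hfa : (shiftFunctor C a).map f = 0 := by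
    rw [← cancel_mono e.hom, zero_comp]
    exact h.hom_vanish _ _ ha hY ((shiftFunctor C a).map f ≫ e.hom)
  exact (shiftFunctor C a).map_injective (by rw [hfa, Functor.map_zero])

lemma hom_eq_zero {X Y : C} (hX : X ∈ L) (hY : Y⟦(1 : ℤ)⟧ ∈ G) (f : X ⟶ Y) : f = 0 :=
  h.hom_eq_zero_of_lt ((shift_zero_mem_iff h.aisle_iso_closed X).2 hX) hY zero_lt_one f

lemma mem_aisle_of_forall_hom_eq_zero {X : C}
    (hX : ∀ Y : C, Y⟦(1 : ℤ)⟧ ∈ G → ∀ f : X ⟶ Y, f = 0) : X ∈ L := by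
  obtain ⟨A, B, f, g, k, hA, hB, hT⟩ := h.exists_triangle X
  obtain ⟨ψ, hψ⟩ := Triangle.yoneda_exact₃ _ hT (𝟙 B)
    (by rw [show g = 0 from hX B hB g]; exact zero_comp)
  have hB0 : IsZero B := by
    rw [IsZero.iff_id_eq_zero, hψ, h.hom_eq_zero (h.shift_aisle A hA) hB ψ]; exact comp_zero
  have : IsIso f := (Triangle.isZero₃_iff_isIso₁ _ hT).1 hB0
  exact h.aisle_iso_closed (asIso f) hA

lemma mem_coaisle_of_forall_hom_eq_zero {Y : C}
    (hY : ∀ X ∈ L, ∀ f : X ⟶ Y⟦(-1 : ℤ)⟧, f = 0) : Y ∈ G := by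
  obtain ⟨A, B, f, g, k, hA, hB, hT⟩ := h.exists_triangle (Y⟦(-1 : ℤ)⟧)
  obtain ⟨ψ, hψ⟩ := Triangle.coyoneda_exact₂ _ (inv_rot_of_distTriang _ hT) (𝟙 A)
    (by rw [show f = 0 from hY A hA f]; exact comp_zero)
  have hB' : B⟦(-1 : ℤ)⟧⟦(2 : ℤ)⟧ ∈ G :=
    (shift_shift_mem_iff h.coaisle_iso_closed B (by norm_num)).2 hB
  have hA0 : IsZero A := by
    rw [IsZero.iff_id_eq_zero, hψ,
      h.hom_eq_zero_of_lt ((shift_zero_mem_iff h.aisle_iso_closed A).2 hA) hB' two_pos ψ]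
    exact zero_comp
  have : IsIso g := (Triangle.isZero₁_iff_isIso₂ _ hT).1 hA0
  exact (shift_shift_mem_iff_of_add_eq_zero h.coaisle_iso_closed Y (by norm_num)).1
    (h.coaisle_iso_closed ((shiftFunctor C (1 : ℤ)).mapIso (asIso g)).symm hB)

lemma obj₂_mem_aisle {T : Triangle C} (hT : T ∈ distTriang C) (h₁ : T.obj₁ ∈ L)
    (h₃ : T.obj₃ ∈ L) : T.obj₂ ∈ L := by
  refine h.mem_aisle_of_forall_hom_eq_zero fun Y hY f => ?_
  obtain ⟨g, rfl⟩ := Triangle.yoneda_exact₂ _ hT f (h.hom_eq_zero h₁ hY _)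
  rw [h.hom_eq_zero h₃ hY g, comp_zero]

lemma obj₂_mem_coaisle {T : Triangle C} (hT : T ∈ distTriang C) (h₁ : T.obj₁ ∈ G)
    (h₃ : T.obj₃ ∈ G) : T.obj₂ ∈ G := by
  refine h.mem_coaisle_of_forall_hom_eq_zero fun X hX f => ?_
  obtain ⟨g, rfl⟩ := Triangle.coyoneda_exact₂ _ (Triangle.shift_distinguished T hT (-1)) f
    (h.hom_vanish _ _ hX h₃ _)
  rw [h.hom_vanish _ _ hX h₁ g]; exact zero_comp

end IsTStructure

section TwoTStructures

variable {L G L' G' : Set C} (h : IsTStructure L G) (h' : IsTStructure L' G')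
include h h'

lemma shiftSet_aisle_subset_iff : shiftSet L ⊆ L' ↔ G' ⊆ shiftSet G := by
  constructor
  · intro hL Y hY
    refine h.mem_coaisle_of_forall_hom_eq_zero fun X hX f => ?_
    have hX' : X⟦(1 : ℤ)⟧ ∈ L' :=
      hL ((shift_shift_mem_iff_of_add_eq_zero h.aisle_iso_closed X (by norm_num)).2 hX)
    have hY' : Y⟦(-1 : ℤ)⟧⟦(-1 : ℤ)⟧⟦(2 : ℤ)⟧ ∈ G' :=
      (shift_shift_mem_iff h'.coaisle_iso_closed _ (show (-1 : ℤ) + 2 = 1 by norm_num)).2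
        ((shift_shift_mem_iff_of_add_eq_zero h'.coaisle_iso_closed Y (by norm_num)).2 hY)
    exact h'.hom_eq_zero_of_lt hX' hY' one_lt_two f
  · intro hG X hX
    refine h'.mem_aisle_of_forall_hom_eq_zero fun Y hY f => ?_
    have hY' : Y⟦(0 : ℤ)⟧ ∈ G :=
      (shift_shift_mem_iff h.coaisle_iso_closed Y (by norm_num)).1 (hG hY)
    exact h.hom_eq_zero_of_lt (show X⟦(-1 : ℤ)⟧ ∈ L from hX) hY' neg_one_lt_zero f

lemma mem_aisle_of_heart_subset (hH : L' ∩ G' ⊆ L) (n : ℕ) :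
    ∀ X ∈ L', X⟦-(n : ℤ)⟧ ∈ G' → X ∈ L := by
  induction n with
  | zero =>
    intro X hX hX₀
    exact hH ⟨hX, (shift_zero_mem_iff h'.coaisle_iso_closed X).1 (by simpa using hX₀)⟩
  | succ n ih =>
    intro X hX hXn
    obtain ⟨A, B, f, g, k, hA, hB, hT⟩ := h'.exists_triangle (X⟦(-1 : ℤ)⟧)
    -- `ΣA → X⟦-1⟧⟦1⟧ ≅ X → B⟦1⟧` splits `X` into a heart object and `ΣA`, `A` one step shorter.
    have hT₁ := Triangle.shift_distinguished _ hT 1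
    have hX₁ : X⟦(-1 : ℤ)⟧⟦(1 : ℤ)⟧ ∈ L' :=
      (shift_shift_mem_iff_of_add_eq_zero h'.aisle_iso_closed X (by norm_num)).2 hX
    have hB_heart : B⟦(1 : ℤ)⟧ ∈ L' ∩ G' :=
      ⟨h'.obj₂_mem_aisle (rot_of_distTriang _ hT₁) hX₁ (h'.shift_aisle _ (h'.shift_aisle _ hA)),
        hB⟩
    have hAn : A⟦-(n : ℤ)⟧ ∈ G' := by
      refine h'.obj₂_mem_coaisle
        (Triangle.shift_distinguished _ (inv_rot_of_distTriang _ hT) (-(n : ℤ))) ?_ ?_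
      · exact (shift_shift_mem_iff h'.coaisle_iso_closed B (c := -(n : ℤ) - 1) (by ring)).2
          (h'.shift_mem_coaisle_of_le hB (by omega))
      · exact (shift_shift_mem_iff h'.coaisle_iso_closed X (by push_cast; ring)).2 hXn
    exact (shift_shift_mem_iff_of_add_eq_zero h.aisle_iso_closed X (by norm_num)).1
      (h.obj₂_mem_aisle hT₁ (h.shift_aisle _ (ih A hA hAn)) (hH hB_heart))

lemma mem_shiftSet_coaisle_of_heart_subset (hH : L' ∩ G' ⊆ shiftSet G) (n : ℕ) :
    ∀ Y ∈ G', Y⟦(n : ℤ)⟧ ∈ L' → Y ∈ shiftSet G := by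
  induction n with
  | zero =>
    intro Y hY hY₀
    exact hH ⟨(shift_zero_mem_iff h'.aisle_iso_closed Y).1 (by simpa using hY₀), hY⟩
  | succ n ih =>
    intro Y hY hYn
    -- `A → Y → B` splits `Y` into a heart object `A` and `B`, with `B⟦1⟧` one step shorter.
    obtain ⟨A, B, f, g, k, hA, hB, hT⟩ := h'.exists_triangle Y
    have hA_heart : A ∈ L' ∩ G' :=
      ⟨hA, h'.obj₂_mem_coaisle (inv_rot_of_distTriang _ hT)
        (h'.shift_mem_coaisle_of_le hB (by norm_num)) hY⟩
    have hBn : B⟦(1 : ℤ)⟧⟦(n : ℤ)⟧ ∈ L' := by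
      refine (shift_shift_mem_iff h'.aisle_iso_closed B (c := (n : ℤ) + 1) (by ring)).2
        (h'.obj₂_mem_aisle (Triangle.shift_distinguished _ (rot_of_distTriang _ hT) _) ?_ ?_)
      · exact_mod_cast hYn
      · exact (shift_shift_mem_iff h'.aisle_iso_closed A (c := (n : ℤ) + 2) (by ring)).2
          (h'.shift_mem_aisle_of_le ((shift_zero_mem_iff h'.aisle_iso_closed A).2 hA) (by omega))
    have hB₁ : B⟦(-1 : ℤ)⟧ ∈ G := h.shift_coaisle _
      ((shift_shift_mem_iff_of_add_eq_zero h.coaisle_iso_closed B (by norm_num)).1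
        (ih _ hB hBn))
    exact h.obj₂_mem_coaisle (Triangle.shift_distinguished _ hT (-1)) (hH hA_heart) hB₁

lemma aisle_subset_of_heart_subset (hG' : ∀ X : C, ∃ n : ℤ, X⟦n⟧ ∈ G')
    (hH : L' ∩ G' ⊆ L) : L' ⊆ L := fun X hX =>
  let ⟨m, hm⟩ := hG' X
  mem_aisle_of_heart_subset h h' hH (-m).toNat X hX (h'.shift_mem_coaisle_of_le hm (by omega))

lemma coaisle_subset_shiftSet_of_heart_subset (hL' : ∀ X : C, ∃ n : ℤ, X⟦n⟧ ∈ L')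
    (hH : L' ∩ G' ⊆ shiftSet G) : G' ⊆ shiftSet G := fun Y hY =>
  let ⟨m, hm⟩ := hL' Y
  mem_shiftSet_coaisle_of_heart_subset h h' hH m.toNat Y hY
    (h'.shift_mem_aisle_of_le hm (by omega))

end TwoTStructures

end Stmt7

open Stmt7

theorem stmt7 {C : Type u} [Category.{v} C] [HasZeroObject C] [Preadditive C] [HasShift C ℤ]
    [∀ n : ℤ, (shiftFunctor C n).Additive] [Pretriangulated C]
    (L G L' G' : Set C) (h : IsTStructure L G) (hb : IsBoundedTStructure L G)
    (h' : IsTStructure L' G') (hb' : IsBoundedTStructure L' G') :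
    (shiftSet L ⊆ L' ∧ L' ⊆ L) ↔ (L' ∩ G' ⊆ L ∩ shiftSet G) := by
  constructor
  · rintro ⟨hShift, hL'⟩ X ⟨hXL', hXG'⟩
    exact ⟨hL' hXL', (shiftSet_aisle_subset_iff h h').1 hShift hXG'⟩
  · intro hH
    have hG' : G' ⊆ shiftSet G :=
      coaisle_subset_shiftSet_of_heart_subset h h' hb'.1 fun _ hX => (hH hX).2
    exact ⟨(shiftSet_aisle_subset_iff h h').2 hG',
      aisle_subset_of_heart_subset h h' hb'.2 fun _ hX => (hH hX).1⟩
end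

section
/- Let (C^{≤0}, C^{≥0}) be a bounded t-structure on a triangulated category C with heart A. Then the Happel–Reiten–Smalø tilt induces a bijection from the set of torsion pairs of A to the set of t-structures on C that are intermediate with respect to (C^{≤0}, C^{≥0}); its inverse takes an intermediate t-structure (C'^{≤0}, C'^{≥0}) to the torsion pair (C'^{≤0} ∩ A, (Σ⁻¹C'^{≥0}) ∩ A) of A. -/
/-!
Both halves of a t-structure `(L, G)` are orthogonals of each other: `X ∈ L` iff
`Hom(X, Y⟦-1⟧) = 0` for all `Y ∈ G`, and `Y ∈ G` iff `Hom(W, Y) = 0` for all `W` with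
`W⟦-1⟧ ∈ L`. With the torsion pair `(T, F)` this gives intrinsic descriptions of the tilt:
`X` lies in the tilted aisle iff `X ∈ L` and `Hom(X, F) = 0`, and `Z` lies in the tilted
co-aisle iff `Z⟦-1⟧ ∈ G` and `Hom(T, Z⟦-1⟧) = 0`. The t-structure axioms for the tilt, its
intermediacy, and both composites of the bijection reduce to these descriptions, except for
the truncation triangles. These are built as in Happel–Reiten–Smalø, from the truncation of
`X`, the truncation of `τ^{≥0} X`, and the torsion sequence of `H⁰ X`.
-/

open CategoryTheory Limits Pretriangulated

namespace Stmt9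

variable {C : Type u} [Category.{v} C] [HasZeroObject C] [Preadditive C] [HasShift C ℤ]
  [∀ n : ℤ, (shiftFunctor C n).Additive] [Pretriangulated C]

/-- A t-structure on `C` given by its aisle `L` and co-aisle `G`. -/
structure IsTStructure (L G : Set C) : Prop where
  aisle_iso_closed : ∀ ⦃X Y : C⦄, (X ≅ Y) → X ∈ L → Y ∈ L
  coaisle_iso_closed : ∀ ⦃X Y : C⦄, (X ≅ Y) → X ∈ G → Y ∈ G
  shift_aisle : ∀ X ∈ L, (X⟦(1 : ℤ)⟧) ∈ L
  shift_coaisle : ∀ X ∈ G, (X⟦(-1 : ℤ)⟧) ∈ G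
  hom_vanish : ∀ (X Y : C), X ∈ L → Y ∈ G → ∀ f : X ⟶ (Y⟦(-1 : ℤ)⟧), f = 0
  exists_triangle : ∀ X : C, ∃ (M' M'' : C) (f : M' ⟶ X) (g : X ⟶ M'')
    (h : M'' ⟶ M'⟦(1 : ℤ)⟧), M' ∈ L ∧ (M''⟦(1 : ℤ)⟧) ∈ G ∧
      Triangle.mk f g h ∈ distTriang C

/-- Boundedness of a t-structure `(L, G)`. -/
def IsBoundedTStructure (L G : Set C) : Prop :=
  (∀ X : C, ∃ n : ℤ, (X⟦n⟧) ∈ L) ∧ (∀ X : C, ∃ n : ℤ, (X⟦n⟧) ∈ G)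

/-- The shift `Σ S` of a strict full subcategory `S`. -/
def shiftSet (S : Set C) : Set C := {X : C | (X⟦(-1 : ℤ)⟧) ∈ S}

/-- The inverse shift `Σ⁻¹ S` of a strict full subcategory `S`. -/
def unshiftSet (S : Set C) : Set C := {X : C | (X⟦(1 : ℤ)⟧) ∈ S}

/-- `(T, F)` is a torsion pair of the heart `H`. -/
structure IsTorsionPairIn (H T F : Set C) : Prop where
  torsion_sub : T ⊆ H
  free_sub : F ⊆ H
  torsion_iso_closed : ∀ ⦃X Y : C⦄, (X ≅ Y) → X ∈ T → Y ∈ T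
  free_iso_closed : ∀ ⦃X Y : C⦄, (X ≅ Y) → X ∈ F → Y ∈ F
  hom_vanish : ∀ (X Y : C), X ∈ T → Y ∈ F → ∀ f : X ⟶ Y, f = 0
  exists_ses : ∀ M ∈ H, ∃ (M' M'' : C) (f : M' ⟶ M) (g : M ⟶ M'')
    (h : M'' ⟶ M'⟦(1 : ℤ)⟧), M' ∈ T ∧ M'' ∈ F ∧ Triangle.mk f g h ∈ distTriang C

/-- The aisle of the Happel–Reiten–Smalø tilt. -/
def tiltAisle (L T : Set C) : Set C :=
  {X : C | ∃ (A B : C) (f : A ⟶ X) (g : X ⟶ B) (h : B ⟶ A⟦(1 : ℤ)⟧),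
    Triangle.mk f g h ∈ (distTriang C) ∧ (A⟦(-1 : ℤ)⟧) ∈ L ∧ B ∈ T}

/-- The co-aisle of the Happel–Reiten–Smalø tilt. -/
def tiltCoaisle (G F : Set C) : Set C :=
  {X : C | ∃ (A B : C) (f : A ⟶ X) (g : X ⟶ B) (h : B ⟶ A⟦(1 : ℤ)⟧),
    Triangle.mk f g h ∈ (distTriang C) ∧ (A⟦(-1 : ℤ)⟧) ∈ F ∧ B ∈ G}

/-- `(L', G')` is intermediate with respect to `(L, G)`:  `ΣL ⊆ L' ⊆ L`. -/
def Intermediate (L L' : Set C) : Prop :=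
  shiftSet L ⊆ L' ∧ L' ⊆ L

end Stmt9

namespace Stmt9

universe v u

section Preadditive

variable {C : Type u} [Category.{v} C] [Preadditive C]

def HomsVanish (X Y : C) : Prop := ∀ f : X ⟶ Y, f = 0

namespace HomsVanish

variable {X X' Y Y' : C}

lemma of_iso_left (h : HomsVanish X Y) (e : X ≅ X') : HomsVanish X' Y := fun f => by
  simpa using e.inv ≫= h (e.hom ≫ f)

lemma of_iso_right (h : HomsVanish X Y) (e : Y ≅ Y') : HomsVanish X Y' := fun f => by
  simpa using h (f ≫ e.inv) =≫ e.hom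

lemma comp_eq_zero_of_left {Z : C} (h : HomsVanish X Y) (f : X ⟶ Y) (g : Y ⟶ Z) :
    f ≫ g = 0 := by
  rw [h f, zero_comp]

lemma comp_eq_zero_of_right {W : C} (h : HomsVanish X Y) (g : W ⟶ X) (f : X ⟶ Y) :
    g ≫ f = 0 := by
  rw [h f, comp_zero]

lemma shift_iff [HasShift C ℤ] [∀ n : ℤ, (shiftFunctor C n).Additive] (n : ℤ) :
    HomsVanish (X⟦n⟧) (Y⟦n⟧) ↔ HomsVanish X Y :=
  ⟨fun h f => (shiftFunctor C n).map_injective (by simpa using h (f⟦n⟧')),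
    fun h f => by obtain ⟨g, rfl⟩ := (shiftFunctor C n).map_surjective f; simp [h g]⟩

end HomsVanish

end Preadditive

variable {C : Type u} [Category.{v} C] [HasZeroObject C] [Preadditive C] [HasShift C ℤ]
  [∀ n : ℤ, (shiftFunctor C n).Additive] [Pretriangulated C]

section Triangle

variable {T : Triangle C} (hT : T ∈ distTriang C)
include hT

lemma homsVanish_from_obj₂ {V : C} (h₁ : HomsVanish T.obj₁ V) (h₃ : HomsVanish T.obj₃ V) :
    HomsVanish T.obj₂ V := fun f => by
  obtain ⟨g, rfl⟩ := T.yoneda_exact₂ hT f (h₁ _)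
  rw [h₃ g, comp_zero]

lemma homsVanish_to_obj₂ {W : C} (h₁ : HomsVanish W T.obj₁) (h₃ : HomsVanish W T.obj₃) :
    HomsVanish W T.obj₂ := fun f => by
  obtain ⟨g, rfl⟩ := T.coyoneda_exact₂ hT f (h₃ _)
  rw [h₁ g, zero_comp]

lemma eq_zero_of_comp_mor₁_eq_zero {W : C} (hW : HomsVanish W (T.obj₃⟦(-1 : ℤ)⟧))
    (φ : W ⟶ T.obj₁) (hφ : φ ≫ T.mor₁ = 0) : φ = 0 := by
  obtain ⟨χ, rfl⟩ := Triangle.coyoneda_exact₂ _ (inv_rot_of_distTriang _ hT) φ hφ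
  exact hW.comp_eq_zero_of_left _ _

lemma isIso_mor₁_of_mor₂_eq_zero (h₂ : T.mor₂ = 0) (h : HomsVanish (T.obj₁⟦(1 : ℤ)⟧) T.obj₃) :
    IsIso T.mor₁ := by
  rw [← T.isZero₃_iff_isIso₁ hT, IsZero.iff_id_eq_zero]
  obtain ⟨ψ, hψ⟩ := T.yoneda_exact₃ hT (𝟙 _) (by rw [h₂, zero_comp])
  rw [hψ]
  exact h.comp_eq_zero_of_right _ _

lemma isIso_mor₂_of_mor₁_eq_zero (h₁ : T.mor₁ = 0) (h : HomsVanish T.obj₁ (T.obj₃⟦(-1 : ℤ)⟧)) :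
    IsIso T.mor₂ := by
  rw [← T.isZero₁_iff_isIso₂ hT, IsZero.iff_id_eq_zero]
  exact eq_zero_of_comp_mor₁_eq_zero hT h _ (by rw [h₁, comp_zero])

end Triangle

lemma distinguished_mk_comp_iso {A X B Y : C} {f : A ⟶ X} {g : X ⟶ B} {k : B ⟶ A⟦(1 : ℤ)⟧}
    (hT : Triangle.mk f g k ∈ distTriang C) (e : X ≅ Y) :
    Triangle.mk (f ≫ e.hom) (e.inv ≫ g) k ∈ distTriang C :=
  isomorphic_distinguished _ hT _
    (Triangle.isoMk _ _ (Iso.refl _) e.symm (Iso.refl _)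
      (by show (f ≫ e.hom) ≫ e.inv = 𝟙 A ≫ f; simp)
      (by show (e.inv ≫ g) ≫ 𝟙 B = e.inv ≫ g; simp)
      (by show k ≫ (𝟙 A)⟦(1 : ℤ)⟧' = 𝟙 B ≫ k; simp))

section Composite

/- With the octahedral axiom the cone of `f₁ ≫ f₂` would be an extension of the cones of `f₁`
and `f₂`; in a pretriangulated category the two lemmas below are what remains of this. -/

variable {X₁ X₂ X₃ Z₁ Z₂ Z₃ : C} {f₁ : X₁ ⟶ X₂} {f₂ : X₂ ⟶ X₃}
  {g₁ : X₂ ⟶ Z₁} {h₁ : Z₁ ⟶ X₁⟦(1 : ℤ)⟧} {g₂ : X₃ ⟶ Z₂} {h₂ : Z₂ ⟶ X₂⟦(1 : ℤ)⟧}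
  {g₃ : X₃ ⟶ Z₃} {h₃ : Z₃ ⟶ X₁⟦(1 : ℤ)⟧}
  (hT₁ : Triangle.mk f₁ g₁ h₁ ∈ distTriang C) (hT₂ : Triangle.mk f₂ g₂ h₂ ∈ distTriang C)
  (hT₃ : Triangle.mk (f₁ ≫ f₂) g₃ h₃ ∈ distTriang C)
include hT₁ hT₂ hT₃

lemma homsVanish_to_cone_comp {W : C} (hZ₁ : HomsVanish W Z₁) (hZ₂ : HomsVanish W Z₂) :
    HomsVanish W Z₃ := by
  intro φ
  have h₃f : h₃ ≫ f₁⟦(1 : ℤ)⟧' ≫ f₂⟦(1 : ℤ)⟧' = 0 := by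
    rw [← Functor.map_comp]; exact comp_distTriang_mor_zero₃₁ _ hT₃
  have hφh₃ : φ ≫ h₃ = 0 := by
    obtain ⟨c₂ : W ⟶ Z₂, hc₂ : φ ≫ h₃ ≫ f₁⟦(1 : ℤ)⟧' = c₂ ≫ h₂⟩ :=
      Triangle.coyoneda_exact₁ _ hT₂ (φ ≫ h₃ ≫ f₁⟦(1 : ℤ)⟧')
        (by show (φ ≫ h₃ ≫ f₁⟦(1 : ℤ)⟧') ≫ f₂⟦(1 : ℤ)⟧' = 0; simp [h₃f])
    obtain ⟨c₁ : W ⟶ Z₁, hc₁ : φ ≫ h₃ = c₁ ≫ h₁⟩ :=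
      Triangle.coyoneda_exact₁ _ hT₁ (φ ≫ h₃)
        (by show (φ ≫ h₃) ≫ f₁⟦(1 : ℤ)⟧' = 0; simp [hc₂, hZ₂ c₂])
    simp [hc₁, hZ₁ c₁]
  obtain ⟨β : W ⟶ X₃, hβ : φ = β ≫ g₃⟩ := Triangle.coyoneda_exact₃ _ hT₃ φ hφh₃
  obtain ⟨γ : W ⟶ X₂, hγ : β = γ ≫ f₂⟩ := Triangle.coyoneda_exact₂ _ hT₂ β (hZ₂ _)
  obtain ⟨δ : W ⟶ X₁, hδ : γ = δ ≫ f₁⟩ := Triangle.coyoneda_exact₂ _ hT₁ γ (hZ₁ _)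
  have hfg : f₁ ≫ f₂ ≫ g₃ = 0 := by
    rw [← Category.assoc]; exact comp_distTriang_mor_zero₁₂ _ hT₃
  simp [hβ, hγ, hδ, hfg]

lemma homsVanish_from_cone_comp {V : C} (hZ₁ : HomsVanish Z₁ V) (hZ₂ : HomsVanish Z₂ V) :
    HomsVanish Z₃ V := by
  intro φ
  have hfg : f₁ ≫ f₂ ≫ g₃ = 0 := by
    rw [← Category.assoc]; exact comp_distTriang_mor_zero₁₂ _ hT₃
  have hg₃φ : g₃ ≫ φ = 0 := by
    obtain ⟨η : Z₁ ⟶ V, hη : f₂ ≫ g₃ ≫ φ = g₁ ≫ η⟩ :=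
      Triangle.yoneda_exact₂ _ hT₁ (f₂ ≫ g₃ ≫ φ)
        (by show f₁ ≫ f₂ ≫ g₃ ≫ φ = 0; simp [reassoc_of% hfg])
    obtain ⟨σ : Z₂ ⟶ V, hσ : g₃ ≫ φ = g₂ ≫ σ⟩ :=
      Triangle.yoneda_exact₂ _ hT₂ (g₃ ≫ φ) (by show f₂ ≫ g₃ ≫ φ = 0; simp [hη, hZ₁ η])
    simp [hσ, hZ₂ σ]
  obtain ⟨t : X₁⟦(1 : ℤ)⟧ ⟶ V, ht : φ = h₃ ≫ t⟩ := Triangle.yoneda_exact₃ _ hT₃ φ hg₃φ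
  obtain ⟨t₁ : X₂⟦(1 : ℤ)⟧ ⟶ V, ht₁ : t = (-f₁⟦(1 : ℤ)⟧') ≫ t₁⟩ :=
    Triangle.yoneda_exact₃ _ (rot_of_distTriang _ hT₁) t (hZ₁ _)
  obtain ⟨t₂ : X₃⟦(1 : ℤ)⟧ ⟶ V, ht₂ : t₁ = (-f₂⟦(1 : ℤ)⟧') ≫ t₂⟩ :=
    Triangle.yoneda_exact₃ _ (rot_of_distTriang _ hT₂) t₁ (hZ₂ _)
  have h₃f : h₃ ≫ f₁⟦(1 : ℤ)⟧' ≫ f₂⟦(1 : ℤ)⟧' = 0 := by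
    rw [← Functor.map_comp]; exact comp_distTriang_mor_zero₃₁ _ hT₃
  simp [ht, ht₁, ht₂, reassoc_of% h₃f]

end Composite

namespace IsTStructure

variable {L G : Set C} (h : IsTStructure L G)
include h

lemma shiftSet_subset : shiftSet L ⊆ L := fun X hX =>
  h.aisle_iso_closed (shiftNegShift X (1 : ℤ)) (h.shift_aisle _ hX)

lemma shift_mem_shiftSet {X : C} (hX : X ∈ L) : X⟦(1 : ℤ)⟧ ∈ shiftSet L :=
  h.aisle_iso_closed (shiftShiftNeg X (1 : ℤ)).symm hX

lemma unshiftSet_subset : unshiftSet G ⊆ G := fun Y hY =>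
  h.coaisle_iso_closed (shiftShiftNeg Y (1 : ℤ)) (h.shift_coaisle _ hY)

lemma homsVanish_of_mem_shiftSet {X Y : C} (hX : X ∈ shiftSet L) (hY : Y ∈ G) :
    HomsVanish X Y :=
  (HomsVanish.shift_iff (-1)).1 (h.hom_vanish _ _ hX hY)

lemma homsVanish_of_mem_unshiftSet {X Y : C} (hX : X ∈ L) (hY : Y ∈ unshiftSet G) :
    HomsVanish X Y :=
  HomsVanish.of_iso_right (h.hom_vanish _ _ hX hY) (shiftShiftNeg Y (1 : ℤ))

lemma mem_aisle_of_homsVanish {X : C} (hX : ∀ Y ∈ G, HomsVanish X (Y⟦(-1 : ℤ)⟧)) : X ∈ L := by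
  obtain ⟨M', M'', f, g, k, hM', hM'', hT⟩ := h.exists_triangle X
  have : IsIso f := isIso_mor₁_of_mor₂_eq_zero hT
    ((hX _ hM'').of_iso_right (shiftShiftNeg M'' (1 : ℤ)) g)
    (h.homsVanish_of_mem_shiftSet (h.shift_mem_shiftSet hM') (h.unshiftSet_subset hM''))
  exact h.aisle_iso_closed (asIso f) hM'

lemma mem_coaisle_of_homsVanish {Y : C} (hY : ∀ X ∈ L, HomsVanish X (Y⟦(-1 : ℤ)⟧)) : Y ∈ G := by
  obtain ⟨M', M'', f, g, k, hM', hM'', hT⟩ := h.exists_triangle (Y⟦(-1 : ℤ)⟧)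
  have : IsIso g := isIso_mor₂_of_mor₁_eq_zero hT (hY M' hM' f)
    (h.hom_vanish _ _ hM' (h.unshiftSet_subset hM''))
  exact h.coaisle_iso_closed
    ((shiftFunctor C (1 : ℤ)).mapIso (asIso g).symm ≪≫ shiftNegShift Y (1 : ℤ)) hM''

lemma mem_coaisle_of_homsVanish_shiftSet {Y : C} (hY : ∀ W ∈ shiftSet L, HomsVanish W Y) :
    Y ∈ G :=
  h.mem_coaisle_of_homsVanish fun _ hX => (HomsVanish.shift_iff 1).1
    ((hY _ (h.shift_mem_shiftSet hX)).of_iso_right (shiftNegShift Y (1 : ℤ)).symm)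

lemma mem_aisle_of_distTriang {T : Triangle C} (hT : T ∈ distTriang C) (h₁ : T.obj₁ ∈ L)
    (h₃ : T.obj₃ ∈ L) : T.obj₂ ∈ L :=
  h.mem_aisle_of_homsVanish fun _ hY =>
    homsVanish_from_obj₂ hT (h.hom_vanish _ _ h₁ hY) (h.hom_vanish _ _ h₃ hY)

lemma mem_coaisle_of_distTriang {T : Triangle C} (hT : T ∈ distTriang C) (h₁ : T.obj₁ ∈ G)
    (h₃ : T.obj₃ ∈ G) : T.obj₂ ∈ G :=
  h.mem_coaisle_of_homsVanish fun _ hX =>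
    homsVanish_to_obj₂ (Triangle.shift_distinguished T hT (-1))
      (h.hom_vanish _ _ hX h₁) (h.hom_vanish _ _ hX h₃)

lemma exists_distTriang_shiftSet (X : C) :
    ∃ (A B : C) (f : A ⟶ X) (g : X ⟶ B) (k : B ⟶ A⟦(1 : ℤ)⟧),
      Triangle.mk f g k ∈ distTriang C ∧ A ∈ shiftSet L ∧ B ∈ G := by
  obtain ⟨M', M'', f, g, k, hM', hM'', hT⟩ := h.exists_triangle (X⟦(-1 : ℤ)⟧)
  exact ⟨_, _, _, _, _, distinguished_mk_comp_iso (Triangle.shift_distinguished _ hT 1)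
    (shiftNegShift X (1 : ℤ)), h.shift_mem_shiftSet hM', hM''⟩

end IsTStructure

section Tilt

variable {L G T F : Set C} (h : IsTStructure L G) (hTP : IsTorsionPairIn (L ∩ G) T F)
include h hTP

lemma mem_torsion_iff {M : C} : M ∈ T ↔ M ∈ L ∩ G ∧ ∀ N ∈ F, HomsVanish M N := by
  refine ⟨fun hM => ⟨hTP.torsion_sub hM, fun N hN => hTP.hom_vanish _ _ hM hN⟩, ?_⟩
  rintro ⟨hM, hMF⟩
  obtain ⟨M₁, M₂, f, g, k, hM₁, hM₂, hT⟩ := hTP.exists_ses M hM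
  have : IsIso f := isIso_mor₁_of_mor₂_eq_zero hT (hMF M₂ hM₂ g)
    (h.homsVanish_of_mem_shiftSet (h.shift_mem_shiftSet (hTP.torsion_sub hM₁).1)
      (hTP.free_sub hM₂).2)
  exact hTP.torsion_iso_closed (asIso f) hM₁

lemma mem_free_iff {M : C} : M ∈ F ↔ M ∈ L ∩ G ∧ ∀ N ∈ T, HomsVanish N M := by
  refine ⟨fun hM => ⟨hTP.free_sub hM, fun N hN => hTP.hom_vanish _ _ hN hM⟩, ?_⟩
  rintro ⟨hM, hTM⟩
  obtain ⟨M₁, M₂, f, g, k, hM₁, hM₂, hT⟩ := hTP.exists_ses M hM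
  have : IsIso g := isIso_mor₂_of_mor₁_eq_zero hT (hTM M₁ hM₁ f)
    (h.hom_vanish _ _ (hTP.torsion_sub hM₁).1 (hTP.free_sub hM₂).2)
  exact hTP.free_iso_closed (asIso g).symm hM₂

lemma mem_tiltAisle_iff {X : C} : X ∈ tiltAisle L T ↔ X ∈ L ∧ ∀ N ∈ F, HomsVanish X N := by
  constructor
  · rintro ⟨A, B, f, g, k, hT, hA, hB⟩
    exact ⟨h.mem_aisle_of_distTriang hT (h.shiftSet_subset hA) (hTP.torsion_sub hB).1,
      fun N hN => homsVanish_from_obj₂ hT (h.homsVanish_of_mem_shiftSet hA (hTP.free_sub hN).2)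
        (hTP.hom_vanish _ _ hB hN)⟩
  · rintro ⟨hX, hXF⟩
    obtain ⟨A, B, f, g, k, hT, hA, hB⟩ := h.exists_distTriang_shiftSet X
    have hAL := h.shiftSet_subset hA
    have hBL : B ∈ L :=
      h.mem_aisle_of_distTriang (rot_of_distTriang _ hT) hX (h.shift_aisle _ hAL)
    refine ⟨A, B, f, g, k, hT, hA, (mem_torsion_iff h hTP).2 ⟨⟨hBL, hB⟩, fun N hN φ => ?_⟩⟩
    obtain ⟨ρ, rfl⟩ := Triangle.yoneda_exact₃ _ hT φ (hXF N hN _)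
    exact (h.homsVanish_of_mem_shiftSet (h.shift_mem_shiftSet hAL)
      (hTP.free_sub hN).2).comp_eq_zero_of_right _ _

lemma mem_tiltCoaisle_iff {Z : C} :
    Z ∈ tiltCoaisle G F ↔ Z⟦(-1 : ℤ)⟧ ∈ G ∧ ∀ N ∈ T, HomsVanish N (Z⟦(-1 : ℤ)⟧) := by
  constructor
  · rintro ⟨A, B, f, g, k, hT, hA, hB⟩
    have hT' := Triangle.shift_distinguished _ hT (-1)
    exact ⟨h.mem_coaisle_of_distTriang hT' (hTP.free_sub hA).2 (h.shift_coaisle _ hB),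
      fun N hN => homsVanish_to_obj₂ hT' (hTP.hom_vanish _ _ hN hA)
        (h.hom_vanish _ _ (hTP.torsion_sub hN).1 hB)⟩
  · rintro ⟨hZ, hTZ⟩
    obtain ⟨A, B, f, g, k, hT, hA, hB⟩ := h.exists_distTriang_shiftSet Z
    have hT' := Triangle.shift_distinguished _ hT (-1)
    have hAG : A⟦(-1 : ℤ)⟧ ∈ G := h.mem_coaisle_of_distTriang (inv_rot_of_distTriang _ hT')
      (h.shift_coaisle _ (h.shift_coaisle _ hB)) hZ
    refine ⟨A, B, f, g, k, hT, (mem_free_iff h hTP).2 ⟨⟨hA, hAG⟩, fun N hN φ => ?_⟩, hB⟩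
    exact eq_zero_of_comp_mor₁_eq_zero hT'
      (h.hom_vanish _ _ (hTP.torsion_sub hN).1 (h.shift_coaisle _ hB)) φ (hTZ N hN _)

lemma shiftSet_subset_tiltAisle : shiftSet L ⊆ tiltAisle L T := fun _ hX =>
  (mem_tiltAisle_iff h hTP).2
    ⟨h.shiftSet_subset hX, fun _ hN => h.homsVanish_of_mem_shiftSet hX (hTP.free_sub hN).2⟩

lemma intermediate_tiltAisle : Intermediate L (tiltAisle L T) :=
  ⟨shiftSet_subset_tiltAisle h hTP, fun _ hX => ((mem_tiltAisle_iff h hTP).1 hX).1⟩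

lemma tilt_hom_vanish {X Z : C} (hX : X ∈ tiltAisle L T) (hZ : Z ∈ tiltCoaisle G F) :
    HomsVanish X (Z⟦(-1 : ℤ)⟧) := by
  obtain ⟨A, B, f, g, k, hT, hA, hB⟩ := hX
  obtain ⟨hZG, hTZ⟩ := (mem_tiltCoaisle_iff h hTP).1 hZ
  exact homsVanish_from_obj₂ hT (h.homsVanish_of_mem_shiftSet hA hZG) (hTZ B hB)

lemma exists_tilt_truncation (X : C) :
    ∃ (M' M'' : C) (f : M' ⟶ X) (g : X ⟶ M'') (k : M'' ⟶ M'⟦(1 : ℤ)⟧),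
      M' ∈ tiltAisle L T ∧ (M''⟦(1 : ℤ)⟧) ∈ tiltCoaisle G F ∧
        Triangle.mk f g k ∈ distTriang C := by
  obtain ⟨A, B, a, g, k₁, hT₁, hA, hB⟩ := h.exists_distTriang_shiftSet X
  obtain ⟨H, B', u, v, k₂, hH, hB', hT₂⟩ := h.exists_triangle B
  have hHG : H ∈ G := h.mem_coaisle_of_distTriang (inv_rot_of_distTriang _ hT₂)
    (h.shift_coaisle _ (h.unshiftSet_subset hB')) hB
  obtain ⟨T₀, F₀, i, p, k₃, hT₀, hF₀, hT₃⟩ := hTP.exists_ses H ⟨hH, hHG⟩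
  obtain ⟨E, e, k₄, hT₄⟩ := distinguished_cocone_triangle (i ≫ u)
  obtain ⟨P, π, k₅, hT₅⟩ := distinguished_cocone_triangle (g ≫ e)
  -- `A → X → B` and `H → B → B'` are truncations, `T₀ → H → F₀` is the torsion sequence of
  -- `H = H⁰ X`, and `P⟦-1⟧ → X → E` will be the truncation of `X` for the tilt.
  have hE : ∀ W, HomsVanish W F₀ → HomsVanish W B' → HomsVanish W E :=
    fun _ => homsVanish_to_cone_comp hT₃ hT₂ hT₄
  have hP : ∀ V, HomsVanish (A⟦(1 : ℤ)⟧) V → HomsVanish (T₀⟦(1 : ℤ)⟧) V → HomsVanish P V :=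
    fun _ => homsVanish_from_cone_comp (rot_of_distTriang _ hT₁) (rot_of_distTriang _ hT₄) hT₅
  have hAL := h.shiftSet_subset hA
  have hT₀L := (hTP.torsion_sub hT₀).1
  have hEG : E ∈ G := h.mem_coaisle_of_homsVanish_shiftSet fun _ hW =>
    hE _ (h.homsVanish_of_mem_shiftSet hW (hTP.free_sub hF₀).2)
      (h.homsVanish_of_mem_shiftSet hW (h.unshiftSet_subset hB'))
  refine ⟨P⟦(-1 : ℤ)⟧, E, _, _, _, (mem_tiltAisle_iff h hTP).2 ⟨?_, fun N hN => ?_⟩,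
    (mem_tiltCoaisle_iff h hTP).2 ⟨?_, fun N hN => ?_⟩, inv_rot_of_distTriang _ hT₅⟩
  · exact h.mem_aisle_of_homsVanish fun Y hY => (HomsVanish.shift_iff (-1)).2
      (hP Y (h.homsVanish_of_mem_shiftSet (h.shift_mem_shiftSet hAL) hY)
        (h.homsVanish_of_mem_shiftSet (h.shift_mem_shiftSet hT₀L) hY))
  · refine (HomsVanish.shift_iff 1).1 ((hP _ ?_ ?_).of_iso_left (shiftNegShift P (1 : ℤ)).symm)
    · exact (HomsVanish.shift_iff 1).2 (h.homsVanish_of_mem_shiftSet hA (hTP.free_sub hN).2)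
    · exact (HomsVanish.shift_iff 1).2 (hTP.hom_vanish _ _ hT₀ hN)
  · exact h.coaisle_iso_closed (shiftShiftNeg E (1 : ℤ)).symm hEG
  · exact (hE N (hTP.hom_vanish _ _ hN hF₀) (h.homsVanish_of_mem_unshiftSet
      (hTP.torsion_sub hN).1 hB')).of_iso_right (shiftShiftNeg E (1 : ℤ)).symm

lemma isTStructure_tilt : IsTStructure (tiltAisle L T) (tiltCoaisle G F) where
  aisle_iso_closed _ _ e := fun ⟨A, B, f, g, k, hT, hA, hB⟩ =>
    ⟨A, B, f ≫ e.hom, e.inv ≫ g, k, distinguished_mk_comp_iso hT e, hA, hB⟩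
  coaisle_iso_closed _ _ e := fun ⟨A, B, f, g, k, hT, hA, hB⟩ =>
    ⟨A, B, f ≫ e.hom, e.inv ≫ g, k, distinguished_mk_comp_iso hT e, hA, hB⟩
  shift_aisle X hX := shiftSet_subset_tiltAisle h hTP
    (h.shift_mem_shiftSet ((intermediate_tiltAisle h hTP).2 hX))
  shift_coaisle Z hZ := by
    obtain ⟨hZG, -⟩ := (mem_tiltCoaisle_iff h hTP).1 hZ
    exact (mem_tiltCoaisle_iff h hTP).2 ⟨h.shift_coaisle _ hZG,
      fun N hN => h.hom_vanish _ _ (hTP.torsion_sub hN).1 hZG⟩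
  hom_vanish _ _ hX hZ := tilt_hom_vanish h hTP hX hZ
  exists_triangle := exists_tilt_truncation h hTP

lemma tiltAisle_inter_heart : tiltAisle L T ∩ (L ∩ G) = T := by
  ext M
  rw [Set.mem_inter_iff, mem_tiltAisle_iff h hTP, mem_torsion_iff h hTP]
  exact ⟨fun ⟨⟨_, hMF⟩, hM⟩ => ⟨hM, hMF⟩, fun ⟨hM, hMF⟩ => ⟨⟨hM.1, hMF⟩, hM⟩⟩

lemma unshiftSet_tiltCoaisle_inter_heart : unshiftSet (tiltCoaisle G F) ∩ (L ∩ G) = F := by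
  ext M
  change M⟦(1 : ℤ)⟧ ∈ tiltCoaisle G F ∧ M ∈ L ∩ G ↔ M ∈ F
  rw [mem_tiltCoaisle_iff h hTP, mem_free_iff h hTP]
  have e := shiftShiftNeg M (1 : ℤ)
  constructor
  · rintro ⟨⟨-, hTM⟩, hM⟩
    exact ⟨hM, fun N hN => (hTM N hN).of_iso_right e⟩
  · rintro ⟨hM, hTM⟩
    exact ⟨⟨h.coaisle_iso_closed e.symm hM.2, fun N hN => (hTM N hN).of_iso_right e.symm⟩, hM⟩

end Tilt

section Intermediate

variable {L G L' G' : Set C} (h : IsTStructure L G) (h' : IsTStructure L' G')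
  (hint : Intermediate L L')
include h h' hint

lemma coaisle_subset_of_intermediate : G ⊆ G' := fun _ hY =>
  h'.mem_coaisle_of_homsVanish fun _ hX => h.hom_vanish _ _ (hint.2 hX) hY

lemma coaisle_subset_shiftSet_of_intermediate : G' ⊆ shiftSet G := fun _ hY =>
  h.mem_coaisle_of_homsVanish_shiftSet fun _ hW => h'.hom_vanish _ _ (hint.1 hW) hY

lemma isTorsionPairIn_of_intermediate :
    IsTorsionPairIn (L ∩ G) (L' ∩ (L ∩ G)) (unshiftSet G' ∩ (L ∩ G)) where
  torsion_sub := Set.inter_subset_right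
  free_sub := Set.inter_subset_right
  torsion_iso_closed _ _ e := fun ⟨h₁, h₂, h₃⟩ =>
    ⟨h'.aisle_iso_closed e h₁, h.aisle_iso_closed e h₂, h.coaisle_iso_closed e h₃⟩
  free_iso_closed _ _ e := fun ⟨h₁, h₂, h₃⟩ =>
    ⟨h'.coaisle_iso_closed ((shiftFunctor C (1 : ℤ)).mapIso e) h₁,
      h.aisle_iso_closed e h₂, h.coaisle_iso_closed e h₃⟩
  hom_vanish X Y hX hY := h'.homsVanish_of_mem_unshiftSet hX.1 hY.1
  exists_ses M hM := by
    obtain ⟨M₁, M₂, f, g, k, hM₁, hM₂, hT⟩ := h'.exists_triangle M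
    have hM₁L : M₁ ∈ L := hint.2 hM₁
    have hM₂G : M₂ ∈ G := h.coaisle_iso_closed (shiftShiftNeg M₂ (1 : ℤ))
      (coaisle_subset_shiftSet_of_intermediate h h' hint hM₂)
    have hM₁G : M₁ ∈ G := h.mem_coaisle_of_distTriang (inv_rot_of_distTriang _ hT)
      (h.shift_coaisle _ hM₂G) hM.2
    have hM₂L : M₂ ∈ L := h.mem_aisle_of_distTriang (rot_of_distTriang _ hT) hM.1
      (h.shift_aisle _ hM₁L)
    exact ⟨M₁, M₂, f, g, k, ⟨hM₁, hM₁L, hM₁G⟩, ⟨hM₂, hM₂L, hM₂G⟩, hT⟩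

lemma tiltAisle_eq_of_intermediate : tiltAisle L (L' ∩ (L ∩ G)) = L' := by
  refine subset_antisymm (fun _ ⟨A, B, f, g, k, hT, hA, hB⟩ =>
    h'.mem_aisle_of_distTriang hT (hint.1 hA) hB.1) fun X hX => ?_
  exact (mem_tiltAisle_iff h (isTorsionPairIn_of_intermediate h h' hint)).2
    ⟨hint.2 hX, fun _ hN => h'.homsVanish_of_mem_unshiftSet hX hN.1⟩

lemma tiltCoaisle_eq_of_intermediate : tiltCoaisle G (unshiftSet G' ∩ (L ∩ G)) = G' := by
  refine subset_antisymm ?_ fun Z hZ => ?_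
  · rintro _ ⟨A, B, f, g, k, hT, hA, hB⟩
    exact h'.mem_coaisle_of_distTriang hT (h'.coaisle_iso_closed (shiftNegShift A (1 : ℤ)) hA.1)
      (coaisle_subset_of_intermediate h h' hint hB)
  · exact (mem_tiltCoaisle_iff h (isTorsionPairIn_of_intermediate h h' hint)).2
      ⟨coaisle_subset_shiftSet_of_intermediate h h' hint hZ,
        fun _ hN => h'.hom_vanish _ _ hN.1 hZ⟩

end Intermediate

end Stmt9

open Stmt9

theorem stmt9 {C : Type u} [Category.{v} C] [HasZeroObject C] [Preadditive C] [HasShift C ℤ]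
    [∀ n : ℤ, (shiftFunctor C n).Additive] [Pretriangulated C]
    (L G : Set C) (h : IsTStructure L G) (hb : IsBoundedTStructure L G) :
    -- the HRS tilt of a torsion pair is an intermediate t-structure
    (∀ T F : Set C, IsTorsionPairIn (L ∩ G) T F →
      IsTStructure (tiltAisle L T) (tiltCoaisle G F) ∧
        Intermediate L (tiltAisle L T)) ∧
    -- surjectivity, with the prescribed inverse:  every intermediate t-structure
    -- arises as the tilt of the torsion pair `(C'^{≤0} ∩ A, (Σ⁻¹C'^{≥0}) ∩ A)`
    (∀ L' G' : Set C, IsTStructure L' G' → Intermediate L L' →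
      IsTorsionPairIn (L ∩ G) (L' ∩ (L ∩ G)) (unshiftSet G' ∩ (L ∩ G)) ∧
        tiltAisle L (L' ∩ (L ∩ G)) = L' ∧
        tiltCoaisle G (unshiftSet G' ∩ (L ∩ G)) = G') ∧
    -- injectivity:  the prescribed inverse recovers the torsion pair from its tilt
    (∀ T F : Set C, IsTorsionPairIn (L ∩ G) T F →
      tiltAisle L T ∩ (L ∩ G) = T ∧ unshiftSet (tiltCoaisle G F) ∩ (L ∩ G) = F) :=
  ⟨fun _ _ hTP => ⟨isTStructure_tilt h hTP, intermediate_tiltAisle h hTP⟩,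
    fun _ _ h' hint => ⟨isTorsionPairIn_of_intermediate h h' hint,
      tiltAisle_eq_of_intermediate h h' hint, tiltCoaisle_eq_of_intermediate h h' hint⟩,
    fun _ _ hTP => ⟨tiltAisle_inter_heart h hTP, unshiftSet_tiltCoaisle_inter_heart h hTP⟩⟩
end
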